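/- arXiv:2507.14490 — 2 statements merged into one kernel-verified Lean document; each statement's English description precedes it below -/
import Mathlib

section
/- Let X and Y be elements of a Banach algebra A with X·Y = q·(Y·X) for a complex number q with |q| < 1, and set u = X·Y. Then for every n ≥ 1, ‖u^n‖^(1/n) ≤ |q|^((n+1)/2) · ‖X‖ · ‖Y‖; in particular ‖u^n‖^(1/n) = O(|q|^(n/2)) as n → ∞. -/
/-!
Pushing each `X` to the right past the `Y`s costs one factor of `q` per `Y` it crosses, so
`(X * Y) ^ n = q ^ (n(n+1)/2) • (Y ^ n * X ^ n)`. Hence `‖(X * Y) ^ n‖` is at most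
`(‖q‖ ^ ((n+1)/2) * ‖X‖ * ‖Y‖) ^ n`, and taking `n`-th roots gives the bound.
-/

section QCommuting

variable {R A : Type*} [CommMonoid R] [Monoid A] [MulAction R A] [IsScalarTower R A A]
  [SMulCommClass R A A] {q : R} {X Y : A}

theorem pow_mul_eq_smul_mul_pow_of_mul_eq_smul (h : X * Y = q • (Y * X)) (n : ℕ) :
    X ^ n * Y = q ^ n • (Y * X ^ n) := by
  induction n with
  | zero => simp
  | succ n ih =>
    calc X ^ (n + 1) * Y = X ^ n * (X * Y) := by rw [pow_succ, mul_assoc]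
    _ = q • ((X ^ n * Y) * X) := by rw [h, mul_smul_comm, mul_assoc]
    _ = q ^ (n + 1) • (Y * X ^ (n + 1)) := by
      rw [ih, smul_mul_assoc, smul_smul, ← pow_succ', mul_assoc, ← pow_succ]

theorem mul_pow_eq_smul_pow_mul_pow_of_mul_eq_smul (h : X * Y = q • (Y * X)) (n : ℕ) :
    (X * Y) ^ n = q ^ (n + 1).choose 2 • (Y ^ n * X ^ n) := by
  induction n with
  | zero => simp
  | succ n ih =>
    calc (X * Y) ^ (n + 1) = q ^ (n + 1).choose 2 • (Y ^ n * (X ^ (n + 1) * Y)) := by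
          rw [pow_succ, ih, smul_mul_assoc, mul_assoc, ← mul_assoc (X ^ n), ← pow_succ]
    _ = (q ^ (n + 1).choose 2 * q ^ (n + 1)) • (Y ^ (n + 1) * X ^ (n + 1)) := by
          rw [pow_mul_eq_smul_mul_pow_of_mul_eq_smul h, mul_smul_comm, smul_smul, ← mul_assoc,
            ← pow_succ]
    _ = q ^ (n + 2).choose 2 • (Y ^ (n + 1) * X ^ (n + 1)) := by
          rw [← pow_add, Nat.choose_succ_succ' (n + 1), Nat.choose_one_right, add_comm]

end QCommuting

theorem norm_mul_pow_le_of_mul_eq_smul {𝕜 A : Type*} [NormedField 𝕜] [NormedRing A]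
    [NormedAlgebra 𝕜 A] {q : 𝕜} {X Y : A} (h : X * Y = q • (Y * X)) {n : ℕ} (hn : 0 < n) :
    ‖(X * Y) ^ n‖ ≤ (‖q‖ ^ (((n : ℝ) + 1) / 2) * ‖X‖ * ‖Y‖) ^ n := by
  have hq : ‖q‖ ^ (n + 1).choose 2 = (‖q‖ ^ (((n : ℝ) + 1) / 2)) ^ n := by
    rw [← Real.rpow_natCast, ← Real.rpow_natCast, ← Real.rpow_mul (norm_nonneg q),
      Nat.cast_choose_two]
    push_cast
    ring_nf
  calc ‖(X * Y) ^ n‖ = ‖q‖ ^ (n + 1).choose 2 * ‖Y ^ n * X ^ n‖ := by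
        rw [mul_pow_eq_smul_pow_mul_pow_of_mul_eq_smul h, norm_smul, norm_pow]
  _ ≤ ‖q‖ ^ (n + 1).choose 2 * (‖Y‖ ^ n * ‖X‖ ^ n) := by
        gcongr
        exact (norm_mul_le _ _).trans
          (mul_le_mul (norm_pow_le' _ hn) (norm_pow_le' _ hn) (norm_nonneg _) (by positivity))
  _ = (‖q‖ ^ (((n : ℝ) + 1) / 2) * ‖X‖ * ‖Y‖) ^ n := by rw [hq]; ring

theorem stmt_3_general {A : Type*} [NormedRing A] [NormedAlgebra ℂ A]
    (q : ℂ) (X Y : A) (h : X * Y = q • (Y * X))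
    (u : A) (hu : u = X * Y) (n : ℕ) (hn : 1 ≤ n) :
    ‖u ^ n‖ ^ ((1 : ℝ) / n) ≤ ‖q‖ ^ (((n : ℝ) + 1) / 2) * ‖X‖ * ‖Y‖ := by
  subst hu
  rw [one_div, Real.rpow_inv_le_iff_of_pos (norm_nonneg _) (by positivity) (by positivity),
    Real.rpow_natCast]
  exact norm_mul_pow_le_of_mul_eq_smul h hn

/-- In a Banach algebra, if `X * Y = q • (Y * X)` with `|q| < 1` and `u = X * Y`, then
for every `n ≥ 1`, `‖u ^ n‖ ^ (1 / n) ≤ |q| ^ ((n + 1) / 2) * ‖X‖ * ‖Y‖`. -/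
theorem stmt_3 {A : Type*} [NormedRing A] [NormedAlgebra ℂ A] [CompleteSpace A]
    (q : ℂ) (hq : ‖q‖ < 1) (X Y : A) (h : X * Y = q • (Y * X))
    (u : A) (hu : u = X * Y) (n : ℕ) (hn : 1 ≤ n) :
    ‖u ^ n‖ ^ ((1 : ℝ) / n) ≤ ‖q‖ ^ (((n : ℝ) + 1) / 2) * ‖X‖ * ‖Y‖ :=
  stmt_3_general q X Y h u hu n hn
end

section
/- Let (h_n) be a sequence of entire functions, ρ > 0, 0 < |q| < 1, and define W_n(z) = h_n(z)·z^n·q^(n(n+1)/2) + Σ_{k=0}^{n} (h_k^(n−k)(0)/(n−k)!)·z^k·q^(k(k+1)/2). Then for every n, ‖h_n‖_ρ · ρ^n · |q|^(n(n+1)/2) ≤ (3/2)·‖W_n‖_ρ + (3/2)² · Σ_{k=0}^{n−1} (5/2)^k · ‖W_{n−1−k}‖_ρ / ρ^(k+1), where ‖·‖_ρ is the sup norm on the closed disc of radius ρ. -/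
/-!
Write `S n = ‖h_n‖_ρ ρ^n |q|^(n(n+1)/2)`. Moving the `k = n` term of the sum into the first
summand gives `W_n(z) = (h_n(z) + h_n(0)) z^n q^(n(n+1)/2) + ∑_{k<n} …`. By the maximum modulus
principle the sup norm of the first summand is at least `‖h_n + h_n(0)‖_ρ ρ^n |q|^(n(n+1)/2)`,
which is at least `(2/3) S n`, and by the Cauchy inequalities the `k`-th term of the remaining sum
has sup norm at most `S k / ρ^(n-k)`. Hence `S n ≤ (3/2) ‖W_n‖_ρ + (3/2) ∑_{k<n} S k / ρ^(n-k)`,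
and this recursive inequality is solved in closed form by a discrete Gronwall argument.
-/

noncomputable def supNorm (ρ : ℝ) (h : ℂ → ℂ) : ℝ :=
  sSup ((fun z => ‖h z‖) '' Metric.closedBall (0 : ℂ) ρ)

noncomputable def Wfun (q : ℂ) (h : ℕ → ℂ → ℂ) (n : ℕ) : ℂ → ℂ := fun z =>
  h n z * z ^ n * q ^ (n * (n + 1) / 2) +
    ∑ k ∈ Finset.range (n + 1),
      (iteratedDeriv (n - k) (h k) 0 / (Nat.factorial (n - k))) * z ^ k * q ^ (k * (k + 1) / 2)

open Metric Finset

section SupNorm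

variable {f : ℂ → ℂ} {ρ : ℝ}

theorem norm_le_supNorm (hf : Continuous f) {z : ℂ} (hz : z ∈ closedBall 0 ρ) :
    ‖f z‖ ≤ supNorm ρ f :=
  le_csSup ((isCompact_closedBall _ _).image (continuous_norm.comp hf)).bddAbove ⟨z, hz, rfl⟩

theorem supNorm_le (hρ : 0 ≤ ρ) {M : ℝ} (hM : ∀ z ∈ closedBall 0 ρ, ‖f z‖ ≤ M) :
    supNorm ρ f ≤ M :=
  Real.sSup_le (by rintro _ ⟨z, hz, rfl⟩; exact hM z hz)
    ((norm_nonneg _).trans (hM 0 (mem_closedBall_self hρ)))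

theorem supNorm_le_three_halves_mul_supNorm_add_const (hf : Continuous f) (hρ : 0 ≤ ρ) :
    supNorm ρ f ≤ 3 / 2 * supNorm ρ (fun z => f z + f 0) := by
  have hg : Continuous fun z => f z + f 0 := by fun_prop
  have h0 : 2 * ‖f 0‖ ≤ supNorm ρ (fun z => f z + f 0) := by
    simpa [← two_mul] using norm_le_supNorm hg (mem_closedBall_self hρ)
  refine supNorm_le hρ fun z hz => ?_
  have hz' := norm_le_supNorm hg hz
  have : ‖f z‖ ≤ ‖f z + f 0‖ + ‖f 0‖ := norm_le_add_norm_add _ _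
  linarith

theorem exists_mem_sphere_supNorm_le (hf : Differentiable ℂ f) (hρ : 0 < ρ) :
    ∃ z ∈ sphere (0 : ℂ) ρ, supNorm ρ f ≤ ‖f z‖ := by
  obtain ⟨z, hz, hmax⟩ := Complex.exists_mem_frontier_isMaxOn_norm isBounded_ball
    (nonempty_ball.2 hρ) hf.diffContOnCl
  rw [frontier_ball 0 hρ.ne'] at hz
  refine ⟨z, hz, supNorm_le hρ.le fun w hw => ?_⟩
  exact hmax (by rwa [closure_ball 0 hρ.ne'])

theorem supNorm_mul_pow_mul_le (hf : Differentiable ℂ f) (hρ : 0 < ρ) (m : ℕ) (c : ℂ) :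
    supNorm ρ f * ρ ^ m * ‖c‖ ≤ supNorm ρ (fun z => f z * z ^ m * c) := by
  obtain ⟨z, hz, hfz⟩ := exists_mem_sphere_supNorm_le hf hρ
  have hzρ : ‖z‖ = ρ := mem_sphere_zero_iff_norm.1 hz
  calc supNorm ρ f * ρ ^ m * ‖c‖ ≤ ‖f z‖ * ρ ^ m * ‖c‖ := by gcongr
    _ = ‖f z * z ^ m * c‖ := by rw [norm_mul, norm_mul, norm_pow, hzρ]
    _ ≤ _ := norm_le_supNorm (f := fun w => f w * w ^ m * c)
      ((hf.continuous.mul (continuous_pow m)).mul continuous_const) (sphere_subset_closedBall hz)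

theorem norm_iteratedDeriv_div_factorial_mul_le (hf : Differentiable ℂ f) (hρ : 0 < ρ)
    (j k : ℕ) (c : ℂ) {z : ℂ} (hz : z ∈ closedBall 0 ρ) :
    ‖iteratedDeriv j f 0 / j.factorial * z ^ k * c‖ ≤ supNorm ρ f * ρ ^ k * ‖c‖ / ρ ^ j := by
  have hcauchy : ‖iteratedDeriv j f 0‖ ≤ j.factorial * supNorm ρ f / ρ ^ j :=
    Complex.norm_iteratedDeriv_le_of_forall_mem_sphere_norm_le j hρ hf.diffContOnCl
      fun w hw => norm_le_supNorm hf.continuous (sphere_subset_closedBall hw)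
  have hzρ : ‖z‖ ≤ ρ := mem_closedBall_zero_iff.1 hz
  rw [norm_mul, norm_mul, norm_div, norm_pow, Complex.norm_natCast]
  calc ‖iteratedDeriv j f 0‖ / j.factorial * ‖z‖ ^ k * ‖c‖
      ≤ j.factorial * supNorm ρ f / ρ ^ j / j.factorial * ρ ^ k * ‖c‖ := by
        gcongr
        exact div_nonneg ((norm_nonneg _).trans hcauchy) (by positivity)
    _ = _ := by field_simp

end SupNorm

section DiscreteGronwall

variable {a ρ : ℝ} (C : ℕ → ℝ)

noncomputable def gronwallMajorant (a ρ : ℝ) (C : ℕ → ℝ) (m : ℕ) : ℝ :=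
  a * ∑ k ∈ range m, (1 + a) ^ k * C (m - 1 - k) / ρ ^ (k + 1)

theorem gronwallMajorant_succ (m : ℕ) :
    gronwallMajorant a ρ C (m + 1) = (a * C m + (1 + a) * gronwallMajorant a ρ C m) / ρ := by
  have hterm : ∀ k ∈ range m, (1 + a) ^ (k + 1) * C (m + 1 - 1 - (k + 1)) / ρ ^ (k + 1 + 1) =
      (1 + a) * ((1 + a) ^ k * C (m - 1 - k) / ρ ^ (k + 1)) / ρ := fun k _ => by
    rw [show m + 1 - 1 - (k + 1) = m - 1 - k by omega, pow_succ, pow_succ ρ (k + 1)]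
    ring
  rw [gronwallMajorant, gronwallMajorant, sum_range_succ', sum_congr rfl hterm, ← sum_div,
    ← mul_sum]
  simp only [Nat.add_sub_cancel, Nat.sub_zero, pow_zero, zero_add, pow_one, one_mul]
  ring

theorem sum_div_pow_gronwallMajorant (m : ℕ) :
    ∑ k ∈ range m, (a * C k + a * gronwallMajorant a ρ C k) / ρ ^ (m - k) =
      gronwallMajorant a ρ C m := by
  induction m with
  | zero => simp [gronwallMajorant]
  | succ m ih =>
    have hterm : ∀ k ∈ range m, (a * C k + a * gronwallMajorant a ρ C k) / ρ ^ (m + 1 - k) =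
        (a * C k + a * gronwallMajorant a ρ C k) / ρ ^ (m - k) / ρ := fun k hk => by
      rw [show m + 1 - k = m - k + 1 by have := mem_range.1 hk; omega, pow_succ, div_div]
    rw [sum_range_succ, sum_congr rfl hterm, ← sum_div, ih, gronwallMajorant_succ C,
      Nat.add_sub_cancel_left, pow_one]
    ring

theorem le_gronwallMajorant_of_le_sum_div_pow (ha : 0 ≤ a) (hρ : 0 ≤ ρ) {S : ℕ → ℝ}
    (hS : ∀ n, S n ≤ a * C n + a * ∑ k ∈ range n, S k / ρ ^ (n - k)) (n : ℕ) :
    S n ≤ a * C n + a * gronwallMajorant a ρ C n := by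
  induction n using Nat.strong_induction_on with
  | _ n ih =>
    refine (hS n).trans ?_
    rw [← sum_div_pow_gronwallMajorant C n]
    gcongr with k hk
    exact ih k (mem_range.1 hk)

end DiscreteGronwall

theorem Wfun_eq_add_sum (q : ℂ) (h : ℕ → ℂ → ℂ) (n : ℕ) (z : ℂ) :
    Wfun q h n z = (h n z + h n 0) * z ^ n * q ^ (n * (n + 1) / 2) +
      ∑ k ∈ range n, iteratedDeriv (n - k) (h k) 0 / (n - k).factorial * z ^ k *
        q ^ (k * (k + 1) / 2) := by
  rw [Wfun, sum_range_succ, Nat.sub_self, iteratedDeriv_zero, Nat.factorial_zero, Nat.cast_one,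
    div_one]
  ring

theorem continuous_Wfun (q : ℂ) {h : ℕ → ℂ → ℂ} (hh : ∀ n, Differentiable ℂ (h n)) (n : ℕ) :
    Continuous (Wfun q h n) := by
  have := (hh n).continuous
  unfold Wfun
  fun_prop

theorem supNorm_weighted_le_recursive (q : ℂ) {h : ℕ → ℂ → ℂ}
    (hh : ∀ n, Differentiable ℂ (h n)) {ρ : ℝ} (hρ : 0 < ρ) (n : ℕ) :
    supNorm ρ (h n) * ρ ^ n * ‖q‖ ^ (n * (n + 1) / 2) ≤
      3 / 2 * supNorm ρ (Wfun q h n) + 3 / 2 * ∑ k ∈ range n,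
        supNorm ρ (h k) * ρ ^ k * ‖q‖ ^ (k * (k + 1) / 2) / ρ ^ (n - k) := by
  set g : ℂ → ℂ := fun z => h n z + h n 0
  have hW : supNorm ρ (fun z => g z * z ^ n * q ^ (n * (n + 1) / 2)) ≤
      supNorm ρ (Wfun q h n) + ∑ k ∈ range n,
        supNorm ρ (h k) * ρ ^ k * ‖q‖ ^ (k * (k + 1) / 2) / ρ ^ (n - k) := by
    refine supNorm_le hρ.le fun z hz => ?_
    rw [eq_sub_of_add_eq (Wfun_eq_add_sum q h n z).symm]
    refine (norm_sub_le _ _).trans (add_le_add (norm_le_supNorm (continuous_Wfun q hh n) hz) ?_)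
    refine (norm_sum_le _ _).trans (sum_le_sum fun k _ => ?_)
    simpa only [norm_pow] using norm_iteratedDeriv_div_factorial_mul_le (hh k) hρ (n - k) k
      (q ^ (k * (k + 1) / 2)) hz
  calc supNorm ρ (h n) * ρ ^ n * ‖q‖ ^ (n * (n + 1) / 2)
      ≤ 3 / 2 * (supNorm ρ g * ρ ^ n * ‖q ^ (n * (n + 1) / 2)‖) := by
        rw [norm_pow, ← mul_assoc, ← mul_assoc]
        gcongr
        exact supNorm_le_three_halves_mul_supNorm_add_const (hh n).continuous hρ.le
    _ ≤ 3 / 2 * supNorm ρ (fun z => g z * z ^ n * q ^ (n * (n + 1) / 2)) := by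
        gcongr
        exact supNorm_mul_pow_mul_le ((hh n).add_const _) hρ n _
    _ ≤ _ := by
        rw [← mul_add]
        gcongr

theorem stmt_8_general (q : ℂ)
    (h : ℕ → ℂ → ℂ) (hh : ∀ n, Differentiable ℂ (h n)) (ρ : ℝ) (hρ : 0 < ρ) (n : ℕ) :
    supNorm ρ (h n) * ρ ^ n * ‖q‖ ^ (n * (n + 1) / 2) ≤
      (3 / 2) * supNorm ρ (Wfun q h n) +
        (3 / 2) ^ 2 * ∑ k ∈ Finset.range n,
          (5 / 2 : ℝ) ^ k * supNorm ρ (Wfun q h (n - 1 - k)) / ρ ^ (k + 1) := by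
  refine (le_gronwallMajorant_of_le_sum_div_pow (fun m => supNorm ρ (Wfun q h m))
    (by norm_num) hρ.le (supNorm_weighted_le_recursive q hh hρ) n).trans_eq ?_
  rw [gronwallMajorant, ← mul_assoc]
  norm_num

/-- Lemma 2.6: the coefficient estimate
`‖h_n‖_ρ ρ^n |q|^{n(n+1)/2} ≤ (3/2)‖W_n‖_ρ + (3/2)² ∑_{k=0}^{n-1} (5/2)^k ‖W_{n-1-k}‖_ρ / ρ^{k+1}`. -/
theorem stmt_8 (q : ℂ) (hq0 : 0 < ‖q‖) (hq1 : ‖q‖ < 1)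
    (h : ℕ → ℂ → ℂ) (hh : ∀ n, Differentiable ℂ (h n)) (ρ : ℝ) (hρ : 0 < ρ) (n : ℕ) :
    supNorm ρ (h n) * ρ ^ n * ‖q‖ ^ (n * (n + 1) / 2) ≤
      (3 / 2) * supNorm ρ (Wfun q h n) +
        (3 / 2) ^ 2 * ∑ k ∈ Finset.range n,
          (5 / 2 : ℝ) ^ k * supNorm ρ (Wfun q h (n - 1 - k)) / ρ ^ (k + 1) :=
  stmt_8_general q h hh ρ hρ n
end
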